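/- Let n, k be positive integers with k > n, and let P = ℂ[z_{αi} (1 ≤ α ≤ n, 1 ≤ i ≤ k), w₁, …, w_k]. For 1 ≤ α ≤ n define q_α = Σ_{i=1}^k z_{αi} w_i, and let det₊ ∈ P be the determinant of the n×n matrix (z_{αi})_{1 ≤ α, i ≤ n}. If f ∈ ℂ[w_{n+1}, …, w_k] (regarded as a subring of P) satisfies f · det₊ ∈ (q₁, …, q_n), then f = 0. Consequently the map ℂ[w_{n+1},…,w_k] → P/(q₁,…,q_n), f ↦ f·det₊, is injective. -/

import Mathlib

open MvPolynomial

/-- The quadratic polynomial `q_α = Σ_{i=1}^k z_{αi} w_i` in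
`P = ℂ[z_{αi} (1 ≤ α ≤ n, 1 ≤ i ≤ k), w₁, …, w_k]` (the variables `z_{αi}` indexed by
`Sum.inl (α, i)`, the variables `w_i` by `Sum.inr i`). -/
noncomputable def qPoly (n k : ℕ) (α : Fin n) :
    MvPolynomial ((Fin n × Fin k) ⊕ Fin k) ℂ :=
  ∑ i : Fin k, X (Sum.inl (α, i)) * X (Sum.inr i)

/-- `det₊ ∈ P`: the determinant of the upper-left `n×n` block `(z_{αi})_{1 ≤ α,i ≤ n}`
(assuming `n ≤ k`). -/
noncomputable def detPlus (n k : ℕ) (hnk : n ≤ k) :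
    MvPolynomial ((Fin n × Fin k) ⊕ Fin k) ℂ :=
  Matrix.det (Matrix.of fun α i : Fin n =>
    (X (Sum.inl (α, Fin.castLE hnk i)) : MvPolynomial ((Fin n × Fin k) ⊕ Fin k) ℂ))

/-- The inclusion `ℂ[w_{n+1},…,w_k] → P`, where the subring of `w`-variables with index
greater than `n` is realized as polynomials on `{i : Fin k // n ≤ i}`. -/
noncomputable def wTailIncl (n k : ℕ) :
    MvPolynomial {i : Fin k // n ≤ (i : ℕ)} ℂ →ₐ[ℂ]
      MvPolynomial ((Fin n × Fin k) ⊕ Fin k) ℂ :=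
  rename fun i => Sum.inr i.1

/-!
Specialize `z_{αi} ↦ δ_{αi}`, `w_i ↦ 0` for `i ≤ n` and `w_i ↦ w_i` for `i > n`. This kills
every `q_α` (its only surviving term is `w_α ↦ 0`), sends `det₊` to `det 1 = 1` and is the
identity on `ℂ[w_{n+1},…,w_k]`, so it maps `f · det₊ ∈ (q₁,…,q_n)` to `f = 0`.
-/

section Retraction

variable {A B : Type*} [CommRing A] [CommRing B] (φ : A →+* B) (ι : B →+* A)
  {I : Ideal A} {d : A}

theorem eq_zero_of_mul_mem_of_leftInverse (hφι : Function.LeftInverse φ ι)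
    (hI : I ≤ RingHom.ker φ) (hd : φ d = 1) {b : B} (h : ι b * d ∈ I) : b = 0 := by
  simpa [RingHom.mem_ker, hd, hφι b] using hI h

theorem injective_quotientMk_mul_of_leftInverse (hφι : Function.LeftInverse φ ι)
    (hI : I ≤ RingHom.ker φ) (hd : φ d = 1) :
    Function.Injective fun b => Ideal.Quotient.mk I (ι b * d) := by
  intro b c h
  rw [Ideal.Quotient.eq, ← sub_mul, ← map_sub] at h
  exact sub_eq_zero.mp (eq_zero_of_mul_mem_of_leftInverse φ ι hφι hI hd h)

end Retraction

noncomputable def specialization (n k : ℕ) :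
    MvPolynomial ((Fin n × Fin k) ⊕ Fin k) ℂ →ₐ[ℂ]
      MvPolynomial {i : Fin k // n ≤ (i : ℕ)} ℂ :=
  aeval <| Sum.elim (fun p => if (p.2 : ℕ) = p.1 then 1 else 0)
    (fun i => if h : n ≤ (i : ℕ) then X ⟨i, h⟩ else 0)

theorem specialization_qPoly (n k : ℕ) (α : Fin n) : specialization n k (qPoly n k α) = 0 := by
  refine (map_sum _ _ _).trans (Finset.sum_eq_zero fun i _ => ?_)
  by_cases h : (i : ℕ) = α <;> simp [specialization, h]

theorem span_qPoly_le_ker_specialization (n k : ℕ) :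
    Ideal.span (Set.range (qPoly n k)) ≤ RingHom.ker (specialization n k) := by
  rw [Ideal.span_le]
  rintro _ ⟨α, rfl⟩
  exact specialization_qPoly n k α

theorem specialization_detPlus (n k : ℕ) (hnk : n ≤ k) :
    specialization n k (detPlus n k hnk) = 1 := by
  rw [detPlus, AlgHom.map_det]
  refine (congrArg Matrix.det ?_).trans Matrix.det_one
  ext α i
  simp [specialization, Matrix.one_apply, Fin.ext_iff, eq_comm]

theorem leftInverse_specialization_wTailIncl (n k : ℕ) :
    Function.LeftInverse (specialization n k) (wTailIncl n k) := by
  intro f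
  rw [specialization, wTailIncl, aeval_rename]
  convert aeval_X_left_apply f
  ext i
  simp [i.2]

theorem stmt9_general (n k : ℕ) (hnk : n < k) :
    (∀ f : MvPolynomial {i : Fin k // n ≤ (i : ℕ)} ℂ,
      wTailIncl n k f * detPlus n k hnk.le ∈
        Ideal.span (Set.range fun α : Fin n => qPoly n k α) → f = 0) ∧
    Function.Injective fun f : MvPolynomial {i : Fin k // n ≤ (i : ℕ)} ℂ =>
      Ideal.Quotient.mk (Ideal.span (Set.range fun α : Fin n => qPoly n k α))
        (wTailIncl n k f * detPlus n k hnk.le) := by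
  have hI := span_qPoly_le_ker_specialization n k
  have hd := specialization_detPlus n k hnk.le
  have hφι := leftInverse_specialization_wTailIncl n k
  exact ⟨fun f => eq_zero_of_mul_mem_of_leftInverse _ _ hφι hI hd,
    injective_quotientMk_mul_of_leftInverse _ (wTailIncl n k).toRingHom hφι hI hd⟩

/-- Let `n, k` be positive integers with `k > n`.  If
`f ∈ ℂ[w_{n+1}, …, w_k]` satisfies `f · det₊ ∈ (q₁, …, q_n)`, then `f = 0`.
Consequently the map `ℂ[w_{n+1},…,w_k] → P/(q₁,…,q_n)`, `f ↦ f·det₊`, is injective. -/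
theorem stmt9 (n k : ℕ) (hn : 0 < n) (hnk : n < k) :
    (∀ f : MvPolynomial {i : Fin k // n ≤ (i : ℕ)} ℂ,
      wTailIncl n k f * detPlus n k hnk.le ∈
        Ideal.span (Set.range fun α : Fin n => qPoly n k α) → f = 0) ∧
    Function.Injective fun f : MvPolynomial {i : Fin k // n ≤ (i : ℕ)} ℂ =>
      Ideal.Quotient.mk (Ideal.span (Set.range fun α : Fin n => qPoly n k α))
        (wTailIncl n k f * detPlus n k hnk.le) :=
  stmt9_general n k hnk
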